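/- arXiv:0810.3273 — 4 statements merged into one kernel-verified Lean document; each statement's English description precedes it below -/
import Mathlib

section
/- For the elementary Blaschke factor b(z,w) = (|w|/w)·(w−z)/(1−w̄z) (with b(z,0)=z), and for any z, w in the open unit disk, the inequality |1 − b(z,w)| ≤ ((1+|z|)/|1−w̄z|)·(1−|w|) holds. -/
/-!
Away from `w = 0`, clearing the denominator gives
`1 - b(z,w) = (1 - |w|)(1 + (|w|/w) z) / (1 - w̄z)`, because `|w|² = w w̄`;
the middle factor has modulus at most `1 + |z|` since `|w|/w` is unimodular.
-/

/-- The elementary Blaschke factor `b(z,w)`. -/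
noncomputable def blaschke (z w : ℂ) : ℂ :=
  if w = 0 then z else (((‖w‖ : ℝ) : ℂ) / w) * ((w - z) / (1 - (starRingEnd ℂ) w * z))

open ComplexConjugate

lemma one_sub_conj_mul_ne_zero {z w : ℂ} (hz : ‖z‖ ≤ 1) (hw : ‖w‖ < 1) :
    1 - conj w * z ≠ 0 := by
  have hlt : ‖conj w * z‖ < 1 := by
    rw [norm_mul, Complex.norm_conj]
    nlinarith [norm_nonneg w, norm_nonneg z]
  rw [sub_ne_zero]
  intro h
  rw [← h, norm_one] at hlt
  exact lt_irrefl 1 hlt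

lemma one_sub_blaschke_eq {z w : ℂ} (hw : w ≠ 0) (hd : 1 - conj w * z ≠ 0) :
    1 - blaschke z w = (1 - (‖w‖ : ℂ)) * (1 + (‖w‖ : ℂ) / w * z) / (1 - conj w * z) := by
  have hnorm_sq : (‖w‖ : ℂ) * ‖w‖ = w * conj w := by
    rw [Complex.mul_conj, Complex.normSq_eq_norm_sq]
    push_cast
    ring
  have hd' : 1 - z * conj w ≠ 0 := by rwa [mul_comm z]
  rw [blaschke, if_neg hw]
  field_simp
  linear_combination z * hnorm_sq

lemma norm_one_add_norm_div_mul_le (z w : ℂ) : ‖1 + (‖w‖ : ℂ) / w * z‖ ≤ 1 + ‖z‖ := by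
  have hunit : ‖(‖w‖ : ℂ) / w‖ ≤ 1 := by
    rw [norm_div, Complex.norm_real, norm_norm]
    exact div_self_le_one _
  calc ‖1 + (‖w‖ : ℂ) / w * z‖ ≤ 1 + ‖(‖w‖ : ℂ) / w‖ * ‖z‖ := by
        simpa only [norm_one, norm_mul] using norm_add_le (1 : ℂ) ((‖w‖ : ℂ) / w * z)
    _ ≤ 1 + ‖z‖ := by
        gcongr
        exact mul_le_of_le_one_left (norm_nonneg z) hunit

/-- For `z, w` in the open unit disk,
`|1 − b(z,w)| ≤ ((1+|z|)/|1−w̄z|)·(1−|w|)`. -/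
theorem abs_one_sub_blaschke_le (z w : ℂ)
    (hz : ‖z‖ < 1) (hw : ‖w‖ < 1) :
    ‖1 - blaschke z w‖ ≤
      (1 + ‖z‖) / ‖1 - (starRingEnd ℂ) w * z‖ * (1 - ‖w‖) := by
  rcases eq_or_ne w 0 with rfl | hw0
  · simpa [blaschke] using norm_sub_le (1 : ℂ) z
  have hnorm : ‖1 - (‖w‖ : ℂ)‖ = 1 - ‖w‖ := by
    rw [← Complex.ofReal_one, ← Complex.ofReal_sub, Complex.norm_real, Real.norm_of_nonneg]
    linarith
  rw [one_sub_blaschke_eq hw0 (one_sub_conj_mul_ne_zero hz.le hw), norm_div, norm_mul, hnorm,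
    div_mul_eq_mul_div (1 + ‖z‖), mul_comm (1 + ‖z‖)]
  gcongr
  exact norm_one_add_norm_div_mul_le z w
end

section
/- If (w_j) is a sequence in the open unit disk with ∑_j (1 − |w_j|) = ∞, then the partial products ∏_{j=1}^N b(z, w_j) converge to 0 uniformly on compact subsets of the disk as N → ∞. -/
open Filter

open Topology ComplexConjugate

/-! For `‖z‖ ≤ r < 1` the identity `|1 - w̄z|² - |w - z|² = (1 - |w|²)(1 - |z|²)` gives
`|b(z, w)| ≤ (|w| + r) / (1 + |w| r) ≤ exp (-(1 - r)(1 - |w|) / 2)`, so on that disk the partial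
products are bounded uniformly by `exp (-(1 - r) / 2 · ∑_{j<N} (1 - |w_j|))`, which tends to `0`
when the series diverges. Every compact subset of the unit disk lies in such a disk. -/

lemma tendstoUniformlyOn_zero_of_norm_le {ι α E : Type*} [NormedAddCommGroup E] {l : Filter ι}
    {F : ι → α → E} {s : Set α} {u : ι → ℝ} (hu : Tendsto u l (𝓝 0))
    (hF : ∀ n, ∀ z ∈ s, ‖F n z‖ ≤ u n) :
    TendstoUniformlyOn F 0 l s := by
  rw [Metric.tendstoUniformlyOn_iff]
  intro ε hε
  filter_upwards [hu.eventually_lt_const hε] with n hn z hz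
  simpa [dist_zero_left] using (hF n z hz).trans_lt hn

namespace Complex

lemma normSq_one_sub_conj_mul_sub_normSq_sub (z w : ℂ) :
    normSq (1 - conj w * z) - normSq (w - z) = (1 - normSq w) * (1 - normSq z) := by
  simp only [normSq_apply, sub_re, sub_im, mul_re, mul_im, conj_re, conj_im, one_re, one_im]
  ring

lemma norm_sub_div_norm_one_sub_conj_mul_le {z w : ℂ} (hw : ‖w‖ ≤ 1) (hz : ‖z‖ ≤ 1) :
    ‖w - z‖ / ‖1 - conj w * z‖ ≤ (‖w‖ + ‖z‖) / (1 + ‖w‖ * ‖z‖) := by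
  set a := ‖w‖
  set b := ‖z‖
  set D := ‖1 - conj w * z‖
  have ha : 0 ≤ a := norm_nonneg w
  have hb : 0 ≤ b := norm_nonneg z
  have hD : D ≤ 1 + a * b := by
    calc D ≤ ‖(1 : ℂ)‖ + ‖conj w * z‖ := norm_sub_le _ _
      _ = 1 + a * b := by rw [norm_one, norm_mul, norm_conj]
  have hP : 0 ≤ (1 - a ^ 2) * (1 - b ^ 2) := mul_nonneg (by nlinarith) (by nlinarith)
  -- `(1 + ab)² - (a + b)² = (1 - a²)(1 - b²) = D² - ‖w - z‖²`
  have hid : ‖w - z‖ ^ 2 = D ^ 2 - (1 - a ^ 2) * (1 - b ^ 2) := by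
    have := normSq_one_sub_conj_mul_sub_normSq_sub z w
    simp only [← Complex.sq_norm] at this
    linarith
  rcases (show 0 ≤ D from norm_nonneg _).eq_or_lt with hD0 | hD0
  · rw [← hD0, div_zero]
    positivity
  rw [div_le_div_iff₀ hD0 (by positivity)]
  apply le_of_pow_le_pow_left₀ two_ne_zero (by positivity)
  rw [mul_pow, mul_pow, hid]
  nlinarith [mul_le_mul_of_nonneg_left (pow_le_pow_left₀ hD0.le hD 2) hP]

end Complex

lemma norm_blaschke_le {z w : ℂ} (hw : ‖w‖ ≤ 1) (hz : ‖z‖ ≤ 1) :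
    ‖blaschke z w‖ ≤ (‖w‖ + ‖z‖) / (1 + ‖w‖ * ‖z‖) := by
  by_cases h0 : w = 0
  · simp [blaschke, h0]
  rw [blaschke, if_neg h0, norm_mul, norm_div, Complex.norm_real, norm_norm,
    div_self (norm_ne_zero_iff.mpr h0), one_mul, norm_div]
  exact Complex.norm_sub_div_norm_one_sub_conj_mul_le hw hz

lemma add_div_one_add_mul_le_exp {a b r : ℝ} (ha : 0 ≤ a) (ha1 : a ≤ 1) (hb : 0 ≤ b)
    (hbr : b ≤ r) (hr : r ≤ 1) :
    (a + b) / (1 + a * b) ≤ Real.exp (-((1 - r) / 2 * (1 - a))) := by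
  have hpos : 0 < 1 + a * b := by positivity
  -- `1 - (a + b) / (1 + ab) = (1 - a)(1 - b) / (1 + ab)` and `1 + ab ≤ 2`
  have key : (a + b) / (1 + a * b) ≤ 1 - (1 - r) / 2 * (1 - a) := by
    have hab : a * b ≤ 1 := mul_le_one₀ ha1 hb (hbr.trans hr)
    have hfactor : (1 - r) / 2 * (1 + a * b) ≤ 1 - b := by nlinarith
    rw [div_le_iff₀ hpos]
    nlinarith [mul_le_mul_of_nonneg_left hfactor (sub_nonneg.mpr ha1)]
  linarith [Real.add_one_le_exp (-((1 - r) / 2 * (1 - a)))]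

lemma norm_prod_blaschke_le_exp {w : ℕ → ℂ} (hw : ∀ j, ‖w j‖ ≤ 1) {r : ℝ} (hr : r ≤ 1)
    {z : ℂ} (hz : ‖z‖ ≤ r) (s : Finset ℕ) :
    ‖∏ j ∈ s, blaschke z (w j)‖ ≤ Real.exp (-((1 - r) / 2 * ∑ j ∈ s, (1 - ‖w j‖))) := by
  rw [norm_prod, Finset.mul_sum, ← Finset.sum_neg_distrib, Real.exp_sum]
  refine Finset.prod_le_prod (fun j _ => norm_nonneg _) fun j _ => ?_
  exact (norm_blaschke_le (hw j) (hz.trans hr)).trans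
    (add_div_one_add_mul_le_exp (norm_nonneg _) (hw j) (norm_nonneg _) hz hr)

lemma tendstoUniformlyOn_prod_blaschke_closedBall {w : ℕ → ℂ} (hw : ∀ j, ‖w j‖ ≤ 1)
    (hdiv : Tendsto (fun N => ∑ j ∈ Finset.range N, (1 - ‖w j‖)) atTop atTop)
    {r : ℝ} (hr : r < 1) :
    TendstoUniformlyOn (fun N z => ∏ j ∈ Finset.range N, blaschke z (w j)) 0 atTop
      (Metric.closedBall 0 r) := by
  refine tendstoUniformlyOn_zero_of_norm_le ?_ fun N z hz =>
    norm_prod_blaschke_le_exp hw hr.le (mem_closedBall_zero_iff.mp hz) _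
  exact Real.tendsto_exp_atBot.comp
    (tendsto_neg_atTop_atBot.comp (hdiv.const_mul_atTop (by linarith)))

/-- If `(w_j)` is a sequence in the open unit disk with `∑_j (1 − |w_j|) = ∞`, then the
partial products `∏_{j<N} b(z, w_j)` converge to `0` uniformly on compact subsets of the
disk as `N → ∞`. -/
theorem blaschke_prod_tendsto_zero (w : ℕ → ℂ) (hw : ∀ j, ‖w j‖ < 1)
    (hdiv : ¬ Summable (fun j => 1 - ‖w j‖)) :
    ∀ K ⊆ Metric.ball (0 : ℂ) 1, IsCompact K →
      TendstoUniformlyOn (fun N z => ∏ j ∈ Finset.range N, blaschke z (w j)) 0 atTop K := by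
  intro K hK hKc
  obtain ⟨r, hr, hKr⟩ := exists_lt_subset_ball hKc.isClosed hK
  have hS : Tendsto (fun N => ∑ j ∈ Finset.range N, (1 - ‖w j‖)) atTop atTop :=
    (not_summable_iff_tendsto_nat_atTop_of_nonneg fun j => sub_nonneg.mpr (hw j).le).mp hdiv
  exact (tendstoUniformlyOn_prod_blaschke_closedBall (fun j => (hw j).le) hS hr).mono
    (hKr.trans Metric.ball_subset_closedBall)
end

section
/- Let C be a circle of radius r in ℂ and let w be a point outside C. For the function f_w(z) = arg(w − z) on C, the total variation of f_w along C is at most 2π and also at most 4r/dist(w, C). -/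
/-!
Write `w - z₀ = R e^{iφ}` with `R > r`. Differentiating `w - z(θ) = ‖w - z(θ)‖ e^{i a(θ)}` shows
that any differentiable argument `a` has `a'(θ) = F(θ - φ)`, where
`F(t) = r (r - R cos t) / (R² + r² - 2 r R cos t)` is the derivative of `arg (R - r e^{it})`.
`F` changes sign only where `cos t = r / R`, i.e. at `t = ±(π/2 - s)` with `s = arcsin (r / R)`,
and there the argument equals `∓s`, while it vanishes at `t = ±π`. Hence the total variation over
a period is exactly `4 arcsin (r / R)`, which is at most `2π`, and `arcsin q ≤ tan (arcsin q) ≤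
q / (1 - q)` gives the bound `4 r / (R - r) = 4 r / dist(w, C)`.
-/

open Real

noncomputable def circleArgDeriv (R r t : ℝ) : ℝ :=
  r * (r - R * cos t) / (R ^ 2 + r ^ 2 - 2 * r * R * cos t)

/-- `arg (R - r e^{it})` for `0 ≤ r < R`: the real part is positive, so it is an arctangent. -/
noncomputable def circleArg (R r t : ℝ) : ℝ :=
  arctan (-(r * sin t) / (R - r * cos t))

open Metric in
theorem infDist_sphere_of_le {E : Type*} [NormedAddCommGroup E] [NormedSpace ℝ E] {x c : E}
    {r : ℝ} (hr : 0 ≤ r) (h : r ≤ dist x c) : infDist x (sphere c r) = dist x c - r := by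
  rcases (hr.trans h).eq_or_lt with hd | hd
  · obtain rfl : r = 0 := le_antisymm (hd ▸ h) hr
    rw [← hd, sphere_zero, infDist_singleton, ← hd, sub_zero]
  set y := c + (r / dist x c) • (x - c)
  have hy : y ∈ sphere c r := by
    rw [mem_sphere, dist_eq_norm, add_sub_cancel_left, norm_smul, ← dist_eq_norm,
      Real.norm_of_nonneg (by positivity), div_mul_cancel₀ _ hd.ne']
  refine le_antisymm ((infDist_le_dist_of_mem hy).trans_eq ?_) ?_
  · have hxy : x - y = (1 - r / dist x c) • (x - c) := by
      simp only [y, sub_smul, one_smul]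
      abel
    rw [dist_eq_norm, hxy, norm_smul,
      Real.norm_of_nonneg (by rw [sub_nonneg, div_le_one hd]; exact h), ← dist_eq_norm, sub_mul,
      one_mul, div_mul_cancel₀ _ hd.ne']
  · rw [le_infDist ⟨y, hy⟩]
    intro z hz
    linarith [dist_triangle x z c, mem_sphere.mp hz]

theorem arcsin_le_div_one_sub {x : ℝ} (h₀ : 0 ≤ x) (h₁ : x < 1) : arcsin x ≤ x / (1 - x) := by
  have hsqrt : 1 - x ≤ √(1 - x ^ 2) :=
    Real.le_sqrt_of_sq_le (by nlinarith)
  calc arcsin x ≤ tan (arcsin x) := le_tan (arcsin_nonneg.mpr h₀) (arcsin_lt_pi_div_two.mpr h₁)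
    _ = x / √(1 - x ^ 2) := tan_arcsin x
    _ ≤ x / (1 - x) := div_le_div_of_nonneg_left h₀ (by linarith) hsqrt

theorem cos_le_sin_of_pi_div_two_sub_le_abs {s t : ℝ} (hs : s ≤ π / 2) (h₁ : π / 2 - s ≤ |t|)
    (h₂ : |t| ≤ π) : cos t ≤ sin s := by
  rw [← cos_abs, ← cos_pi_div_two_sub]
  exact cos_le_cos_of_nonneg_of_le_pi (by linarith) h₂ h₁

theorem sin_le_cos_of_abs_le_pi_div_two_sub {s t : ℝ} (hs : 0 ≤ s) (h : |t| ≤ π / 2 - s) :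
    sin s ≤ cos t := by
  rw [← cos_abs, ← cos_pi_div_two_sub]
  exact cos_le_cos_of_nonneg_of_le_pi (abs_nonneg t) (by linarith [pi_pos]) h

theorem integral_abs_eq_sub_of_nonneg {f F : ℝ → ℝ} {a b : ℝ} (hab : a ≤ b)
    (hF : ∀ x ∈ Set.uIcc a b, HasDerivAt F (f x) x)
    (hf : IntervalIntegrable f MeasureTheory.volume a b) (h : ∀ x ∈ Set.Icc a b, 0 ≤ f x) :
    ∫ x in a..b, |f x| = F b - F a := by
  rw [intervalIntegral.integral_congr (g := f)
      fun x hx => abs_of_nonneg (h x (Set.uIcc_of_le hab ▸ hx)),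
    intervalIntegral.integral_eq_sub_of_hasDerivAt hF hf]

theorem integral_abs_eq_sub_of_nonpos {f F : ℝ → ℝ} {a b : ℝ} (hab : a ≤ b)
    (hF : ∀ x ∈ Set.uIcc a b, HasDerivAt F (f x) x)
    (hf : IntervalIntegrable f MeasureTheory.volume a b) (h : ∀ x ∈ Set.Icc a b, f x ≤ 0) :
    ∫ x in a..b, |f x| = F a - F b := by
  rw [intervalIntegral.integral_congr (g := fun x => -f x)
      fun x hx => abs_of_nonpos (h x (Set.uIcc_of_le hab ▸ hx)),
    intervalIntegral.integral_neg, intervalIntegral.integral_eq_sub_of_hasDerivAt hF hf, neg_sub]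

section
variable {R r : ℝ}

theorem circleArgDeriv_denom_pos (hr : 0 ≤ r) (hrR : r < R) (t : ℝ) :
    0 < R ^ 2 + r ^ 2 - 2 * r * R * cos t := by
  nlinarith [mul_pos (sub_pos.2 hrR) (sub_pos.2 hrR),
    mul_nonneg (mul_nonneg hr (hr.trans hrR.le)) (sub_nonneg.2 (cos_le_one t))]

theorem hasDerivAt_circleArg (hr : 0 ≤ r) (hrR : r < R) (t : ℝ) :
    HasDerivAt (circleArg R r) (circleArgDeriv R r t) t := by
  have hden : 0 < R - r * cos t := by nlinarith [mul_le_mul_of_nonneg_left (cos_le_one t) hr]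
  refine ((((hasDerivAt_sin t).const_mul r).fun_neg).fun_div
    (((hasDerivAt_cos t).const_mul r).const_sub R) hden.ne').arctan.congr_deriv ?_
  have hsq : R ^ 2 + r ^ 2 - 2 * r * R * cos t = (R - r * cos t) ^ 2 + (r * sin t) ^ 2 := by
    linear_combination r ^ 2 * (sin_sq_add_cos_sq t).symm
  rw [circleArgDeriv, hsq]
  field_simp
  linear_combination r ^ 2 * sin_sq_add_cos_sq t

theorem continuous_circleArgDeriv (hr : 0 ≤ r) (hrR : r < R) : Continuous (circleArgDeriv R r) :=
  Continuous.div (by fun_prop) (by fun_prop) fun t => (circleArgDeriv_denom_pos hr hrR t).ne'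

theorem circleArgDeriv_nonneg (hr : 0 ≤ r) (hrR : r < R) {t : ℝ} (h : R * cos t ≤ r) :
    0 ≤ circleArgDeriv R r t :=
  div_nonneg (mul_nonneg hr (sub_nonneg.2 h)) (circleArgDeriv_denom_pos hr hrR t).le

theorem circleArgDeriv_nonpos (hr : 0 ≤ r) (hrR : r < R) {t : ℝ} (h : r ≤ R * cos t) :
    circleArgDeriv R r t ≤ 0 :=
  div_nonpos_of_nonpos_of_nonneg (mul_nonpos_of_nonneg_of_nonpos hr (sub_nonpos.2 h))
    (circleArgDeriv_denom_pos hr hrR t).le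

theorem periodic_circleArgDeriv (R r : ℝ) : Function.Periodic (circleArgDeriv R r) (2 * π) := by
  intro t
  simp only [circleArgDeriv, cos_add_two_pi]

theorem circleArg_neg (R r t : ℝ) : circleArg R r (-t) = -circleArg R r t := by
  simp only [circleArg, sin_neg, cos_neg, mul_neg, neg_neg, neg_div, arctan_neg]

theorem circleArg_pi (R r : ℝ) : circleArg R r π = 0 := by
  simp [circleArg]

theorem circleArg_pi_div_two_sub {s : ℝ} (hR : R ≠ 0) (hs₀ : -(π / 2) < s) (hs₁ : s < π / 2) :
    circleArg R (R * sin s) (π / 2 - s) = -s := by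
  have hcos : cos s ≠ 0 := (cos_pos_of_mem_Ioo ⟨hs₀, hs₁⟩).ne'
  have htan : -(R * sin s * sin (π / 2 - s)) / (R - R * sin s * cos (π / 2 - s)) = tan (-s) := by
    rw [sin_pi_div_two_sub, cos_pi_div_two_sub, tan_neg, tan_eq_sin_div_cos,
      show R - R * sin s * sin s = R * cos s ^ 2 by rw [cos_sq']; ring]
    field_simp
  rw [circleArg, htan, arctan_tan (by linarith) (by linarith)]

theorem integral_abs_circleArgDeriv_mul_sin {s : ℝ} (hR : 0 < R) (hs₀ : 0 < s) (hs₁ : s < π / 2) :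
    ∫ t in -π..π, |circleArgDeriv R (R * sin s) t| = 4 * s := by
  have hr : 0 < R * sin s := mul_pos hR (sin_pos_of_pos_of_lt_pi hs₀ (by linarith [pi_pos]))
  have hrR : R * sin s < R := mul_lt_of_lt_one_right hR
    (sin_pi_div_two ▸ sin_lt_sin_of_lt_of_le_pi_div_two (by linarith [pi_pos]) le_rfl hs₁)
  set α := π / 2 - s with hα
  have hα₁ : α ≤ π := by linarith [pi_pos]
  have hArg : circleArg R (R * sin s) α = -s :=
    circleArg_pi_div_two_sub hR.ne' (by linarith [pi_pos]) hs₁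
  have hF : ∀ a b, ∀ t ∈ Set.uIcc a b,
      HasDerivAt (circleArg R (R * sin s)) (circleArgDeriv R (R * sin s) t) t :=
    fun _ _ t _ => hasDerivAt_circleArg hr.le hrR t
  have hint : ∀ a b, IntervalIntegrable (circleArgDeriv R (R * sin s)) MeasureTheory.volume a b :=
    (continuous_circleArgDeriv hr.le hrR).intervalIntegrable
  have hcos_le : ∀ t, α ≤ |t| → |t| ≤ π → R * cos t ≤ R * sin s := fun t h₁ h₂ =>
    mul_le_mul_of_nonneg_left (cos_le_sin_of_pi_div_two_sub_le_abs hs₁.le h₁ h₂) hR.le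
  have hle_cos : ∀ t, |t| ≤ α → R * sin s ≤ R * cos t := fun t h =>
    mul_le_mul_of_nonneg_left (sin_le_cos_of_abs_le_pi_div_two_sub hs₀.le h) hR.le
  have h₁ : ∫ t in -π..-α, |circleArgDeriv R (R * sin s) t| = s := by
    rw [integral_abs_eq_sub_of_nonneg (by linarith) (hF _ _) (hint _ _) fun t ht =>
      circleArgDeriv_nonneg hr.le hrR (hcos_le t (le_abs.2 (Or.inr (by linarith [ht.2])))
        (abs_le.2 ⟨ht.1, by linarith [ht.2]⟩)), circleArg_neg, circleArg_neg, hArg, circleArg_pi]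
    ring
  have h₂ : ∫ t in -α..α, |circleArgDeriv R (R * sin s) t| = 2 * s := by
    rw [integral_abs_eq_sub_of_nonpos (by linarith) (hF _ _) (hint _ _) fun t ht =>
      circleArgDeriv_nonpos hr.le hrR (hle_cos t (abs_le.2 ht)), circleArg_neg, hArg]
    ring
  have h₃ : ∫ t in α..π, |circleArgDeriv R (R * sin s) t| = s := by
    rw [integral_abs_eq_sub_of_nonneg hα₁ (hF _ _) (hint _ _) fun t ht =>
      circleArgDeriv_nonneg hr.le hrR (hcos_le t (le_abs.2 (Or.inl ht.1))
        (abs_le.2 ⟨by linarith [ht.1], ht.2⟩)), hArg, circleArg_pi]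
    ring
  have habs : ∀ a b, IntervalIntegrable (fun t => |circleArgDeriv R (R * sin s) t|)
      MeasureTheory.volume a b := fun a b => (hint a b).abs
  rw [← intervalIntegral.integral_add_adjacent_intervals (habs _ (-α)) (habs _ π),
    ← intervalIntegral.integral_add_adjacent_intervals (habs _ α) (habs _ π), h₁, h₂, h₃]
  ring

theorem integral_abs_circleArgDeriv (hr : 0 < r) (hrR : r < R) :
    ∫ t in -π..π, |circleArgDeriv R r t| = 4 * arcsin (r / R) := by
  have hR : 0 < R := hr.trans hrR
  have hq : r / R ∈ Set.Icc (-1) 1 := ⟨by linarith [div_pos hr hR], ((div_lt_one hR).2 hrR).le⟩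
  have hsin : R * sin (arcsin (r / R)) = r := by rw [sin_arcsin hq.1 hq.2, mul_div_cancel₀ _ hR.ne']
  simpa only [hsin] using integral_abs_circleArgDeriv_mul_sin hR (arcsin_pos.2 (div_pos hr hR))
    (arcsin_lt_pi_div_two.2 ((div_lt_one hR).2 hrR))

end

open Complex in
theorem deriv_eq_im_deriv_div_of_eq_norm_mul_exp {u : ℝ → ℂ} {b : ℝ → ℝ} {t : ℝ}
    (hu : DifferentiableAt ℝ u t) (hb : DifferentiableAt ℝ b t) (ht : u t ≠ 0)
    (h : ∀ s, u s = ‖u s‖ * exp (b s * I)) :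
    deriv b t = (deriv u t / u t).im := by
  -- `u e^{-ib} = ‖u‖` is real-valued, so its derivative `e^{-ib} (u' - i b' u)` is real too
  have hv : HasDerivAt (fun s => u s * exp (-(b s * I)))
      (deriv u t * exp (-(b t * I)) + u t * (exp (-(b t * I)) * -(deriv b t * I))) t :=
    hu.hasDerivAt.mul (hb.hasDerivAt.ofReal_comp.mul_const I).neg.cexp
  have hv_im : HasDerivAt (fun s => (u s * exp (-(b s * I))).im)
      (deriv u t * exp (-(b t * I)) + u t * (exp (-(b t * I)) * -(deriv b t * I))).im t :=
    imCLM.hasFDerivAt.comp_hasDerivAt t hv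
  have hreal : (fun s => (u s * exp (-(b s * I))).im) = fun _ => 0 := by
    funext s
    rw [h s, mul_assoc, ← Complex.exp_add, add_neg_cancel, Complex.exp_zero, mul_one, ofReal_im]
  rw [hreal] at hv_im
  have hexp : exp (-(b t * I)) = ‖u t‖ / u t := by
    rw [eq_div_iff ht, Complex.exp_neg, inv_mul_eq_iff_eq_mul₀ (Complex.exp_ne_zero _)]
    exact (h t).trans (mul_comm _ _)
  have hnorm : (‖u t‖ : ℝ) ≠ 0 := norm_ne_zero_iff.2 ht
  have := hv_im.unique (hasDerivAt_const t 0)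
  rw [hexp, show deriv u t * (‖u t‖ / u t) + u t * (‖u t‖ / u t * -(deriv b t * Complex.I)) =
      ‖u t‖ * (deriv u t / u t - deriv b t * Complex.I) by field_simp; ring,
    Complex.im_ofReal_mul, Complex.sub_im, Complex.mul_I_im, Complex.ofReal_re] at this
  exact (sub_eq_zero.1 ((mul_eq_zero.1 this).resolve_left hnorm)).symm

open Complex in
theorem im_div_sub_circleMap (c : ℂ) (r θ : ℝ) :
    (-(circleMap 0 r θ * I) / (c - circleMap 0 r θ)).im = circleArgDeriv ‖c‖ r (θ - arg c) := by
  rw [div_im, ← sub_div, circleArgDeriv]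
  congr 1
  · simp only [circleMap, zero_add, neg_im, mul_im, mul_re, ofReal_re, exp_ofReal_mul_I_re,
      ofReal_im, exp_ofReal_mul_I_im, zero_mul, sub_zero, I_im, mul_one, add_zero, I_re, mul_zero,
      sub_re, neg_mul, neg_re, zero_sub, neg_neg, sub_im, Real.cos_sub]
    rw [← norm_mul_cos_arg c, ← norm_mul_sin_arg c]
    linear_combination r ^ 2 * Real.sin_sq_add_cos_sq θ
  · simp only [circleMap, zero_add, normSq_apply, sub_re, mul_re, ofReal_re, exp_ofReal_mul_I_re,
      ofReal_im, exp_ofReal_mul_I_im, zero_mul, sub_zero, sub_im, mul_im, add_zero, Real.cos_sub]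
    rw [← norm_mul_cos_arg c, ← norm_mul_sin_arg c]
    linear_combination r ^ 2 * Real.sin_sq_add_cos_sq θ + ‖c‖ ^ 2 * Real.sin_sq_add_cos_sq (arg c)

theorem deriv_eq_circleArgDeriv {z₀ w : ℂ} {r θ : ℝ} {b : ℝ → ℝ}
    (hb : DifferentiableAt ℝ b θ) (hw : w ≠ circleMap z₀ r θ)
    (h : ∀ θ, w - circleMap z₀ r θ = ‖w - circleMap z₀ r θ‖ * Complex.exp (b θ * Complex.I)) :
    deriv b θ = circleArgDeriv ‖w - z₀‖ r (θ - Complex.arg (w - z₀)) := by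
  rw [deriv_eq_im_deriv_div_of_eq_norm_mul_exp ((differentiable_circleMap z₀ r).const_sub w θ) hb
      (sub_ne_zero.2 hw) h, deriv_const_sub, (hasDerivAt_circleMap z₀ r θ).deriv,
    ← sub_sub_sub_cancel_right w (circleMap z₀ r θ) z₀, circleMap_sub_center]
  exact im_div_sub_circleMap _ r θ

/-- Let `C` be the circle of radius `r > 0` centered at `z₀` and let `w` lie strictly
outside the closed disk bounded by `C`. If `a : ℝ → ℝ` is a differentiable continuous
choice of `arg(w − z)` along the circle (`z = z₀ + r e^{iθ}`), then the total variation
`∫₀^{2π} |a'(θ)| dθ` is at most `2π` and at most `4r / dist(w, C)`. -/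
theorem variation_of_arg_on_circle
    (z₀ w : ℂ) (r : ℝ) (hr : 0 < r) (hout : r < ‖w - z₀‖)
    (a : ℝ → ℝ) (hdiff : Differentiable ℝ a)
    (ha : ∀ θ : ℝ, w - (z₀ + (r : ℂ) * Complex.exp (θ * Complex.I)) =
      (‖w - (z₀ + (r : ℂ) * Complex.exp (θ * Complex.I))‖ : ℂ) *
        Complex.exp ((a θ : ℂ) * Complex.I)) :
    (∫ θ in (0:ℝ)..(2 * π), |deriv a θ|) ≤ 2 * π ∧
    (∫ θ in (0:ℝ)..(2 * π), |deriv a θ|) ≤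
      4 * r / Metric.infDist w (Metric.sphere z₀ r) := by
  have hw : ∀ θ, w ≠ circleMap z₀ r θ := fun θ hθ => by
    have := circleMap_mem_sphere z₀ hr.le θ
    rw [← hθ, Metric.mem_sphere, dist_eq_norm] at this
    exact hout.ne' this
  have hderiv : ∀ θ, deriv a θ = circleArgDeriv ‖w - z₀‖ r (θ - Complex.arg (w - z₀)) :=
    fun θ => deriv_eq_circleArgDeriv (hdiff θ) (hw θ) ha
  have hvar : ∫ θ in (0:ℝ)..(2 * π), |deriv a θ| = 4 * arcsin (r / ‖w - z₀‖) := by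
    have hper : Function.Periodic (fun t => |circleArgDeriv ‖w - z₀‖ r t|) (2 * π) :=
      (periodic_circleArgDeriv _ r).comp abs
    simp_rw [hderiv]
    rw [intervalIntegral.integral_comp_sub_right (fun t => |circleArgDeriv ‖w - z₀‖ r t|), zero_sub,
      show 2 * π - Complex.arg (w - z₀) = -Complex.arg (w - z₀) + 2 * π by ring,
      hper.intervalIntegral_add_eq _ (-π),
      show -π + 2 * π = π by ring]
    exact integral_abs_circleArgDeriv hr hout
  rw [hvar, infDist_sphere_of_le hr.le (dist_eq_norm w z₀ ▸ hout.le), dist_eq_norm]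
  refine ⟨by linarith [arcsin_le_pi_div_two (r / ‖w - z₀‖)], ?_⟩
  have hR : 0 < ‖w - z₀‖ := hr.trans hout
  calc 4 * arcsin (r / ‖w - z₀‖) ≤ 4 * (r / ‖w - z₀‖ / (1 - r / ‖w - z₀‖)) := by
        gcongr
        exact arcsin_le_div_one_sub (div_nonneg hr.le hR.le) ((div_lt_one hR).2 hout)
    _ = 4 * r / (‖w - z₀‖ - r) := by
        field_simp [(sub_pos.2 hout).ne']
end

section
/- Let G_𝔢 be the potential theoretic Green's function of a finite gap set 𝔢, vanishing on 𝔢 and behaving like log|z| − log cap(𝔢) + O(1/z) near infinity. For a sequence (x_k) in ℝ∖𝔢, the conditions ∑_k G_𝔢(x_k) < ∞ and ∑_k dist(x_k, 𝔢)^{1/2} < ∞ are equivalent, provided that at each band edge x₀ ∈ {α_j, β_j} the Green's function has a square-root zero: G_𝔢(x) ~ c·|x−x₀|^{1/2} with c > 0 as x → x₀ outside 𝔢. -/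
open Filter

private lemma summable_of_eventually_le' {f g : ℕ → ℝ} (hf : ∀ k, 0 ≤ f k)
    (h : ∀ᶠ k in atTop, f k ≤ g k) (hg : Summable g) : Summable f := by
  obtain ⟨N, hN⟩ := eventually_atTop.1 h
  rw [← summable_nat_add_iff N]
  exact Summable.of_nonneg_of_le (fun k => hf _) (fun k => hN _ (Nat.le_add_left N k))
    ((summable_nat_add_iff N).2 hg)

/-- Let `𝔢 = ⋃_j [α_j, β_j]` be a finite gap set and let `G : ℝ → ℝ` be (the restriction
to `ℝ` of) its potential theoretic Green's function: continuous, zero exactly on `𝔢`,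
positive off `𝔢`, bounded below away from `𝔢`, and having a square-root zero
`G(x) ~ c·|x−x₀|^{1/2}` at each band edge `x₀`.  Then for a sequence `(x_k)` in `ℝ∖𝔢`,
`∑_k G(x_k) < ∞` is equivalent to `∑_k dist(x_k, 𝔢)^{1/2} < ∞`. -/
theorem green_summable_iff_sqrt_dist_summable (ℓ : ℕ) (α β : Fin (ℓ + 1) → ℝ)
    (hab : ∀ j, α j < β j)
    (hgap : ∀ j : Fin ℓ, β j.castSucc < α j.succ)
    (G : ℝ → ℝ) (hGcont : Continuous G)
    (hGzero : ∀ x ∈ ⋃ j, Set.Icc (α j) (β j), G x = 0)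
    (hGpos : ∀ x, x ∉ (⋃ j, Set.Icc (α j) (β j)) → 0 < G x)
    (hGlow : ∀ ε > 0, ∃ δ > 0, ∀ x : ℝ, x ∉ (⋃ j, Set.Icc (α j) (β j)) →
      ε ≤ Metric.infDist x (⋃ j, Set.Icc (α j) (β j)) → δ ≤ G x)
    (hedge : ∀ x₀ : ℝ, ((∃ j, x₀ = α j) ∨ (∃ j, x₀ = β j)) →
      ∃ c > 0, Tendsto (fun x => G x / Real.sqrt |x - x₀|)
        (nhdsWithin x₀ (⋃ j, Set.Icc (α j) (β j))ᶜ) (nhds c))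
    (x : ℕ → ℝ) (hx : ∀ k, x k ∉ (⋃ j, Set.Icc (α j) (β j))) :
    Summable (fun k => G (x k)) ↔
      Summable (fun k => Real.sqrt (Metric.infDist (x k) (⋃ j, Set.Icc (α j) (β j)))) := by
  set E := ⋃ j, Set.Icc (α j) (β j) with hEdef
  have hEne : E.Nonempty := ⟨α 0, Set.mem_iUnion.2 ⟨0, Set.left_mem_Icc.2 (hab 0).le⟩⟩
  have hEcpt : IsCompact E := isCompact_iUnion fun j => isCompact_Icc
  -- for any point off E, the infimum distance is attained at a band edge
  have hnear : ∀ y : ℝ, y ∉ E → ∃ e, ((∃ j, e = α j) ∨ (∃ j, e = β j)) ∧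
      Metric.infDist y E = |y - e| := by
    intro y hy
    obtain ⟨z, hzE, hz⟩ := hEcpt.exists_infDist_eq_dist hEne y
    obtain ⟨j, hj⟩ := Set.mem_iUnion.1 hzE
    have hyj : y ∉ Set.Icc (α j) (β j) := fun h => hy (Set.mem_iUnion.2 ⟨j, h⟩)
    rw [Set.mem_Icc, not_and_or, not_le, not_le] at hyj
    rcases hyj with h | h
    · -- y < α j : the nearest point must be α j
      have h1 : dist y z ≤ dist y (α j) := by
        rw [← hz]
        exact Metric.infDist_le_dist_of_mem
          (Set.mem_iUnion.2 ⟨j, Set.left_mem_Icc.2 (hab j).le⟩)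
      have hza : z = α j := by
        rw [Real.dist_eq, Real.dist_eq,
          abs_of_nonpos (by linarith [hj.1] : y - z ≤ 0),
          abs_of_nonpos (by linarith : y - α j ≤ 0)] at h1
        linarith [hj.1]
      exact ⟨z, Or.inl ⟨j, hza⟩, by rw [hz, Real.dist_eq]⟩
    · -- β j < y : the nearest point must be β j
      have h1 : dist y z ≤ dist y (β j) := by
        rw [← hz]
        exact Metric.infDist_le_dist_of_mem
          (Set.mem_iUnion.2 ⟨j, Set.right_mem_Icc.2 (hab j).le⟩)
      have hza : z = β j := by
        rw [Real.dist_eq, Real.dist_eq,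
          abs_of_nonneg (by linarith [hj.2] : 0 ≤ y - z),
          abs_of_nonneg (by linarith : 0 ≤ y - β j)] at h1
        linarith [hj.2]
      exact ⟨z, Or.inr ⟨j, hza⟩, by rw [hz, Real.dist_eq]⟩
  -- two-sided comparison near E
  have key : ∃ r > 0, ∃ C1 > 0, ∃ C2 > 0, ∀ y, y ∉ E → Metric.infDist y E < r →
      C1 * Real.sqrt (Metric.infDist y E) ≤ G y ∧
        G y ≤ C2 * Real.sqrt (Metric.infDist y E) := by
    have H : ∀ i : Fin (ℓ + 1) ⊕ Fin (ℓ + 1), ∃ c > 0, ∃ ρ > 0,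
        ∀ y, |y - Sum.elim α β i| < ρ → y ∉ E →
          (c / 2) * Real.sqrt |y - Sum.elim α β i| ≤ G y ∧
            G y ≤ (2 * c) * Real.sqrt |y - Sum.elim α β i| := by
      intro i
      set e := Sum.elim α β i with he
      have hedge_e : (∃ j, e = α j) ∨ ∃ j, e = β j := by
        cases i with
        | inl j => exact Or.inl ⟨j, rfl⟩
        | inr j => exact Or.inr ⟨j, rfl⟩
      have heE : e ∈ E := by
        rcases hedge_e with ⟨j, hj⟩ | ⟨j, hj⟩
        · exact hj ▸ Set.mem_iUnion.2 ⟨j, Set.left_mem_Icc.2 (hab j).le⟩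
        · exact hj ▸ Set.mem_iUnion.2 ⟨j, Set.right_mem_Icc.2 (hab j).le⟩
      obtain ⟨c, hc, htend⟩ := hedge e hedge_e
      have hio : Set.Ioo (c / 2) (2 * c) ∈ nhds c :=
        Ioo_mem_nhds (by linarith) (by linarith)
      have hev : ∀ᶠ y in nhdsWithin e Eᶜ,
          G y / Real.sqrt |y - e| ∈ Set.Ioo (c / 2) (2 * c) := htend hio
      obtain ⟨ρ, hρ, hball⟩ := Metric.mem_nhdsWithin_iff.1 hev
      refine ⟨c, hc, ρ, hρ, fun y hy hyE => ?_⟩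
      have hy' : y ∈ Metric.ball e ρ := by
        rw [Metric.mem_ball, Real.dist_eq]; exact hy
      obtain ⟨h1, h2⟩ := hball ⟨hy', hyE⟩
      have hne : y ≠ e := fun h => hyE (h ▸ heE)
      have hpos : 0 < Real.sqrt |y - e| :=
        Real.sqrt_pos.2 (abs_pos.2 (sub_ne_zero.2 hne))
      exact ⟨((lt_div_iff₀ hpos).1 h1).le, ((div_lt_iff₀ hpos).1 h2).le⟩
    choose c hc ρ hρ hcomp using H
    haveI : Nonempty (Fin (ℓ + 1) ⊕ Fin (ℓ + 1)) := ⟨Sum.inl 0⟩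
    have hU : (Finset.univ : Finset (Fin (ℓ + 1) ⊕ Fin (ℓ + 1))).Nonempty :=
      Finset.univ_nonempty
    refine ⟨Finset.univ.inf' hU ρ, ?_, Finset.univ.inf' hU (fun i => c i / 2), ?_,
      Finset.univ.sup' hU (fun i => 2 * c i), ?_, ?_⟩
    · exact (Finset.lt_inf'_iff hU).2 fun i _ => hρ i
    · exact (Finset.lt_inf'_iff hU).2 fun i _ => by linarith [hc i]
    · exact (Finset.lt_sup'_iff hU).2 ⟨Sum.inl 0, Finset.mem_univ _, by linarith [hc (Sum.inl 0)]⟩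
    · intro y hy hlt
      obtain ⟨e, hedge_e, hdist⟩ := hnear y hy
      have hie : ∃ i : Fin (ℓ + 1) ⊕ Fin (ℓ + 1), e = Sum.elim α β i := by
        rcases hedge_e with ⟨j, hj⟩ | ⟨j, hj⟩
        exacts [⟨Sum.inl j, hj⟩, ⟨Sum.inr j, hj⟩]
      obtain ⟨i, hi⟩ := hie
      have hlt' : |y - Sum.elim α β i| < ρ i := by
        rw [← hi, ← hdist]
        exact lt_of_lt_of_le hlt (Finset.inf'_le ρ (Finset.mem_univ i))
      obtain ⟨hlo, hhi⟩ := hcomp i y hlt' hy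
      have hs : Real.sqrt (Metric.infDist y E) = Real.sqrt |y - Sum.elim α β i| := by
        rw [hdist, hi]
      rw [hs]
      constructor
      · refine le_trans ?_ hlo
        exact mul_le_mul_of_nonneg_right
          (Finset.inf'_le (fun i => c i / 2) (Finset.mem_univ i)) (Real.sqrt_nonneg _)
      · refine le_trans hhi ?_
        exact mul_le_mul_of_nonneg_right
          (Finset.le_sup' (fun i => 2 * c i) (Finset.mem_univ i)) (Real.sqrt_nonneg _)
  obtain ⟨r, hr, C1, hC1, C2, hC2, hcmp⟩ := key
  constructor
  · intro hS
    have h0 : Tendsto (fun k => G (x k)) atTop (nhds 0) := hS.tendsto_atTop_zero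
    obtain ⟨δ, hδ, hGδ⟩ := hGlow r hr
    have hev : ∀ᶠ k in atTop, Metric.infDist (x k) E < r := by
      filter_upwards [h0.eventually (gt_mem_nhds hδ)] with k hk
      by_contra h
      push_neg at h
      exact absurd (hGδ _ (hx k) h) (by linarith)
    refine summable_of_eventually_le' (fun k => Real.sqrt_nonneg _) ?_ (hS.mul_left C1⁻¹)
    filter_upwards [hev] with k hk
    have hlo := (hcmp _ (hx k) hk).1
    calc Real.sqrt (Metric.infDist (x k) E)
        = C1⁻¹ * (C1 * Real.sqrt (Metric.infDist (x k) E)) := by field_simp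
      _ ≤ C1⁻¹ * G (x k) := mul_le_mul_of_nonneg_left hlo (by positivity)
  · intro hS
    have h0 : Tendsto (fun k => Real.sqrt (Metric.infDist (x k) E)) atTop (nhds 0) :=
      hS.tendsto_atTop_zero
    have hev : ∀ᶠ k in atTop, Metric.infDist (x k) E < r := by
      filter_upwards [h0.eventually (gt_mem_nhds (Real.sqrt_pos.2 hr))] with k hk
      by_contra h
      push_neg at h
      exact absurd hk (not_lt.2 (Real.sqrt_le_sqrt h))
    refine summable_of_eventually_le' (fun k => (hGpos _ (hx k)).le) ?_ (hS.mul_left C2)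
    filter_upwards [hev] with k hk
    exact (hcmp _ (hx k) hk).2
end
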